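/- Let X = (ℝ₊)³ where ℝ₊ is the set of positive real numbers. Define the generalised Hirota map 𝐓 : X³ → X³ by 𝐓((x₁,x₂,x₃),(y₁,y₂,y₃),(z₁,z₂,z₃)) = ((u₁,u₂,u₃),(v₁,v₂,v₃),(w₁,w₂,w₃)) with u₁ = x₁x₃y₁/(x₃z₁ + x₁y₃z₂), u₂ = x₂, u₃ = x₃, v₁ = (x₃z₁ + x₁y₃z₂)/x₃, v₂ = x₂y₃z₂/(x₃z₃), v₃ = x₃z₃, w₁ = x₃y₁z₁/(x₃z₁ + x₁y₃z₂), w₂ = y₂/x₂, w₃ = z₃. Then 𝐓 satisfies the tetrahedron equation T¹²³ ∘ T¹⁴⁵ ∘ T²⁴⁶ ∘ T³⁵⁶ = T³⁵⁶ ∘ T²⁴⁶ ∘ T¹⁴⁵ ∘ T¹²³ on X⁶; the five functions I₁ = x₂, I₂ = x₃, I₃ = z₃, I₄ = x₁y₁, I₅ = y₁z₁ are invariants of 𝐓 (Iⱼ ∘ 𝐓 = Iⱼ); and 𝐓 is noninvolutive: there exists a point p ∈ X³ with (𝐓 ∘ 𝐓)(p) ≠ p. Specialising x₂ = x₃ =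 y₂ = y₃ = z₂ = z₃ = 1 and writing x = x₁, y = y₁, z = z₁, the components (u₁, v₁, w₁) reduce to the Hirota map (x,y,z) ↦ (x·y/(x+z), x+z, y·z/(x+z)), which itself satisfies the tetrahedron equation on (ℝ₊)³ and is involutive. -/

import Mathlib

noncomputable section

section Tetra

variable {X : Type*}

/-- `T` acting on factors 1,2,3 of `X⁶`. -/
def lift123 (T : X × X × X → X × X × X) :
    X × X × X × X × X × X → X × X × X × X × X × X
  | (a, b, c, d, e, f) =>
    match T (a, b, c) with
    | (a', b', c') => (a', b', c', d, e, f)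

/-- `T` acting on factors 1,4,5 of `X⁶`. -/
def lift145 (T : X × X × X → X × X × X) :
    X × X × X × X × X × X → X × X × X × X × X × X
  | (a, b, c, d, e, f) =>
    match T (a, d, e) with
    | (a', d', e') => (a', b, c, d', e', f)

/-- `T` acting on factors 2,4,6 of `X⁶`. -/
def lift246 (T : X × X × X → X × X × X) :
    X × X × X × X × X × X → X × X × X × X × X × X
  | (a, b, c, d, e, f) =>
    match T (b, d, f) with
    | (b', d', f') => (a, b', c, d', e, f')

/-- `T` acting on factors 3,5,6 of `X⁶`. -/
def lift356 (T : X × X × X → X × X × X) :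
    X × X × X × X × X × X → X × X × X × X × X × X
  | (a, b, c, d, e, f) =>
    match T (c, e, f) with
    | (c', e', f') => (a, b, c', d, e', f')

/-- The Zamolodchikov tetrahedron equation for a map `T : X³ → X³`. -/
def IsTetrahedronMap (T : X × X × X → X × X × X) : Prop :=
  lift123 T ∘ lift145 T ∘ lift246 T ∘ lift356 T =
    lift356 T ∘ lift246 T ∘ lift145 T ∘ lift123 T

end Tetra

/-- The positive real numbers. -/
abbrev PReal : Type := { r : ℝ // 0 < r }

/-- `X = (ℝ₊)³`. -/
abbrev Xp : Type := PReal × PReal × PReal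

/-- The generalised Hirota map `𝐓`. -/
def Tg : Xp × Xp × Xp → Xp × Xp × Xp :=
  fun ((x1, x2, x3), (y1, y2, y3), (z1, z2, z3)) =>
    ((x1 * x3 * y1 / (x3 * z1 + x1 * y3 * z2),
      x2,
      x3),
     ((x3 * z1 + x1 * y3 * z2) / x3,
      x2 * y3 * z2 / (x3 * z3),
      x3 * z3),
     (x3 * y1 * z1 / (x3 * z1 + x1 * y3 * z2),
      y2 / x2,
      z3))

def I1 : Xp × Xp × Xp → ℝ := fun ((_, x2, _), _, _) => (x2 : ℝ)
def I2 : Xp × Xp × Xp → ℝ := fun ((_, _, x3), _, _) => (x3 : ℝ)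
def I3 : Xp × Xp × Xp → ℝ := fun (_, _, (_, _, z3)) => (z3 : ℝ)
def I4 : Xp × Xp × Xp → ℝ := fun ((x1, _, _), (y1, _, _), _) => (x1 : ℝ) * (y1 : ℝ)
def I5 : Xp × Xp × Xp → ℝ := fun (_, (y1, _, _), (z1, _, _)) => (y1 : ℝ) * (z1 : ℝ)

/-- The classical Hirota map `(x,y,z) ↦ (x·y/(x+z), x+z, y·z/(x+z))` on `(ℝ₊)³`. -/
def Hirota : PReal × PReal × PReal → PReal × PReal × PReal :=
  fun (x, y, z) => (x * y / (x + z), x + z, y * z / (x + z))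


lemma pc_mul (a b : PReal) : ((a*b : PReal) : ℝ) = (a:ℝ)*(b:ℝ) := rfl
lemma pc_add (a b : PReal) : ((a+b : PReal) : ℝ) = (a:ℝ)+(b:ℝ) := rfl
lemma pc_div (a b : PReal) : ((a/b : PReal) : ℝ) = (a:ℝ)/(b:ℝ) := rfl
lemma pc_one : ((1 : PReal) : ℝ) = 1 := rfl
lemma preal_ext {a b : PReal} (h : (a:ℝ) = b) : a = b := Subtype.ext h

set_option maxHeartbeats 4000000 in
theorem Tg_tetrahedron_invariants_noninvolutive_Hirota :
    IsTetrahedronMap Tg ∧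
    (I1 ∘ Tg = I1) ∧ (I2 ∘ Tg = I2) ∧ (I3 ∘ Tg = I3) ∧
    (I4 ∘ Tg = I4) ∧ (I5 ∘ Tg = I5) ∧
    (∃ p : Xp × Xp × Xp, (Tg ∘ Tg) p ≠ p) ∧
    (∀ x y z : PReal,
      ((Tg ((x, 1, 1), (y, 1, 1), (z, 1, 1))).1.1,
       (Tg ((x, 1, 1), (y, 1, 1), (z, 1, 1))).2.1.1,
       (Tg ((x, 1, 1), (y, 1, 1), (z, 1, 1))).2.2.1) =
        (x * y / (x + z), x + z, y * z / (x + z))) ∧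
    IsTetrahedronMap Hirota ∧ (Hirota ∘ Hirota = id) := by
  refine ⟨?_, ?_, ?_, ?_, ?_, ?_, ?_, ?_, ?_, ?_⟩
  · -- tetrahedron equation for Tg
    funext p
    obtain ⟨⟨a1,a2,a3⟩,⟨b1,b2,b3⟩,⟨c1,c2,c3⟩,⟨d1,d2,d3⟩,⟨e1,e2,e3⟩,⟨f1,f2,f3⟩⟩ := p
    have ha1 := a1.2; have ha2 := a2.2; have ha3 := a3.2
    have hb1 := b1.2; have hb2 := b2.2; have hb3 := b3.2
    have hc1 := c1.2; have hc2 := c2.2; have hc3 := c3.2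
    have hd1 := d1.2; have hd2 := d2.2; have hd3 := d3.2
    have he1 := e1.2; have he2 := e2.2; have he3 := e3.2
    have hf1 := f1.2; have hf2 := f2.2; have hf3 := f3.2
    simp only [Function.comp_apply, lift123, lift145, lift246, lift356, Tg, Prod.mk.injEq]
    and_intros <;>
      first
        | trivial
        | (apply preal_ext; try simp only [pc_mul, pc_add, pc_div, pc_one]
           try field_simp
           try first | ring1 | (left; ring1) | tauto)
  · funext p; obtain ⟨⟨x1,x2,x3⟩,⟨y1,y2,y3⟩,⟨z1,z2,z3⟩⟩ := p; rfl
  · funext p; obtain ⟨⟨x1,x2,x3⟩,⟨y1,y2,y3⟩,⟨z1,z2,z3⟩⟩ := p; rfl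
  · funext p; obtain ⟨⟨x1,x2,x3⟩,⟨y1,y2,y3⟩,⟨z1,z2,z3⟩⟩ := p; rfl
  · funext p
    obtain ⟨⟨x1,x2,x3⟩,⟨y1,y2,y3⟩,⟨z1,z2,z3⟩⟩ := p
    have h1 := x1.2; have h3 := x3.2; have hy1 := y1.2; have hy3 := y3.2
    have hz1 := z1.2; have hz2 := z2.2
    simp only [Function.comp_apply, Tg, I4, pc_mul, pc_add, pc_div]
    field_simp
  · funext p
    obtain ⟨⟨x1,x2,x3⟩,⟨y1,y2,y3⟩,⟨z1,z2,z3⟩⟩ := p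
    have h1 := x1.2; have h3 := x3.2; have hy1 := y1.2; have hy3 := y3.2
    have hz1 := z1.2; have hz2 := z2.2
    simp only [Function.comp_apply, Tg, I5, pc_mul, pc_add, pc_div]
    field_simp
  · -- noninvolutive
    refine ⟨((⟨2, by norm_num⟩, ⟨2, by norm_num⟩, ⟨2, by norm_num⟩),
            (⟨2, by norm_num⟩, ⟨2, by norm_num⟩, ⟨2, by norm_num⟩),
            (⟨2, by norm_num⟩, ⟨2, by norm_num⟩, ⟨2, by norm_num⟩)), fun h => ?_⟩
    have h1 := congrArg (fun q : Xp × Xp × Xp => (q.2.1.2.2 : ℝ)) h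
    simp only [Function.comp_apply, Tg, pc_mul, pc_add, pc_div] at h1
    norm_num at h1
  · -- reduction to Hirota
    intro x y z
    have hx := x.2; have hz := z.2
    refine Prod.ext ?_ (Prod.ext ?_ ?_) <;>
      (apply preal_ext; try simp only [Tg, pc_mul, pc_add, pc_div, pc_one]
       try field_simp
       try first | ring1 | (left; ring1) | tauto)
  · -- Hirota tetrahedron
    funext p
    obtain ⟨a,b,c,d,e,f⟩ := p
    have ha := a.2; have hb := b.2; have hc := c.2
    have hd := d.2; have he := e.2; have hf := f.2
    simp only [Function.comp_apply, lift123, lift145, lift246, lift356, Hirota, Prod.mk.injEq]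
    and_intros <;>
      first
        | trivial
        | (apply preal_ext; try simp only [pc_mul, pc_add, pc_div, pc_one]
           try field_simp
           try first | ring1 | (left; ring1) | tauto)
  · -- Hirota involutive
    funext p
    obtain ⟨x,y,z⟩ := p
    have hx := x.2; have hy := y.2; have hz := z.2
    simp only [Function.comp_apply, Hirota, id_eq, Prod.mk.injEq]
    and_intros <;>
      first
        | trivial
        | (apply preal_ext; try simp only [pc_mul, pc_add, pc_div, pc_one]
           try field_simp
           try first | ring1 | (left; ring1) | tauto)
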